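/- arXiv:2505.18391 — 2 statements merged into one kernel-verified Lean document; each statement's English description precedes it below -/
import Mathlib

section
/- Suppose for each treatment cohort s and time t, μ0(s,t) and μ1(s,t) denote the expected untreated and treated potential outcomes, satisfying no anticipation (μ0(s,t) = μ1(s,t) for all t < s) and parallel trends (μ0(s,t) − μ0(s,t−1) = μ0(1,t) − μ0(1,t−1) for all t ≥ s), where cohort 1 is never treated so the observed mean m(1,t) = μ0(1,t) for all t, and for cohort s the observed mean m(s,t) equals μ0(s,t) for t < s and μ1(s,t) for t ≥ s. Then the ATT τ(s,t) := μ1(s,t) − μ0(s,t) satisfies, for t ≥ s ≥ 2, τ(s,t) = (m(s,t) − m(s,s−1)) − (m(1,t) − m(1,s−1)). -/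
/-- DiD identification of the group-time ATT under no anticipation and parallel trends. -/
theorem stmt2 (T : ℕ) (hT : 2 ≤ T) (μ0 μ1 m : ℕ → ℕ → ℝ)
    (hNA : ∀ s t : ℕ, 2 ≤ s → s ≤ T → 1 ≤ t → t < s → μ0 s t = μ1 s t)
    (hPT : ∀ s t : ℕ, 2 ≤ s → s ≤ T → s ≤ t → t ≤ T →
      μ0 s t - μ0 s (t - 1) = μ0 1 t - μ0 1 (t - 1))
    (hm1 : ∀ t : ℕ, m 1 t = μ0 1 t)
    (hmpre : ∀ s t : ℕ, 2 ≤ s → s ≤ T → t < s → m s t = μ0 s t)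
    (hmpost : ∀ s t : ℕ, 2 ≤ s → s ≤ T → s ≤ t → m s t = μ1 s t)
    (s t : ℕ) (hs2 : 2 ≤ s) (hsT : s ≤ T) (hst : s ≤ t) (htT : t ≤ T) :
    μ1 s t - μ0 s t = (m s t - m s (s - 1)) - (m 1 t - m 1 (s - 1)) := by
  have key : ∀ u : ℕ, s ≤ u → u ≤ T → μ0 s u - μ0 s (s - 1) = μ0 1 u - μ0 1 (s - 1) := by
    intro u
    induction u with
    | zero => intro h; omega
    | succ n ih =>
      intro hsu huT
      rcases eq_or_lt_of_le hsu with h | h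
      · have := hPT s (n+1) hs2 hsT hsu huT
        simp only [Nat.add_sub_cancel] at this
        have hn : n = s - 1 := by omega
        have hss : s - 1 + 1 = s := by omega
        rw [hn, hss] at this
        rw [← h]
        exact this
      · have hsn : s ≤ n := by omega
        have h1 := ih hsn (by omega)
        have h2 := hPT s (n+1) hs2 hsT hsu huT
        simp only [Nat.add_sub_cancel] at h2
        linarith
  have hk := key t hst htT
  rw [hmpost s t hs2 hsT hst, hmpre s (s-1) hs2 hsT (by omega), hm1, hm1]
  linarith
end

section
/- If E[X'Λ_s^{-1}X] is positive definite for each s, then the Gaussian model p_θ(y | w, s) = N(y | Xφ_s, Λ_s) is identifiable: θ_1 ≠ θ_2 implies that for some s the conditional densities p_{θ_1}(· | w, s) and p_{θ_2}(· | w, s) differ on a set of positive probability. -/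
open Matrix MeasureTheory

/-!
If the Gaussians agree for almost every `w`, then a single such `w` forces `Λ₁ = Λ₂`, and
`X w (φ₁ - φ₂) = 0` for almost every `w`. Integrating, the quadratic form of
`E[X'Λ⁻¹X]` vanishes at `φ₁ - φ₂`, so positive definiteness gives `φ₁ = φ₂`.
-/

section

variable {W m n : Type*} [MeasurableSpace W] {g : Measure W} [Fintype m] [Fintype n]

theorem dotProduct_integral_mulVec {M : W → Matrix n n ℝ}
    (hM : ∀ i j, Integrable (fun w => M w i j) g) (v : n → ℝ) :
    v ⬝ᵥ (Matrix.of fun i j => ∫ w, M w i j ∂g) *ᵥ v = ∫ w, v ⬝ᵥ M w *ᵥ v ∂g := by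
  simp only [dotProduct, mulVec, of_apply, Finset.mul_sum]
  rw [integral_finsetSum _ fun i _ => integrable_finsetSum _ fun j _ =>
    ((hM i j).mul_const (v j)).const_mul (v i)]
  refine Finset.sum_congr rfl fun i _ => ?_
  rw [integral_finsetSum _ fun j _ => ((hM i j).mul_const (v j)).const_mul (v i)]
  simp only [integral_const_mul, integral_mul_const]

theorem eq_zero_of_posDef_integral_of_ae_mulVec_eq_zero
    {X : W → Matrix m n ℝ} {A : Matrix m m ℝ}
    (hint : ∀ i j, Integrable (fun w => ((X w)ᵀ * A * X w) i j) g)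
    (hpd : (Matrix.of fun i j => ∫ w, ((X w)ᵀ * A * X w) i j ∂g).PosDef)
    {v : n → ℝ} (hv : ∀ᵐ w ∂g, X w *ᵥ v = 0) : v = 0 := by
  by_contra hv0
  have hpos := hpd.dotProduct_mulVec_pos hv0
  have hzero : ∀ᵐ w ∂g, v ⬝ᵥ ((X w)ᵀ * A * X w) *ᵥ v = 0 := by
    filter_upwards [hv] with w hw
    rw [← mulVec_mulVec, ← mulVec_mulVec, hw, mulVec_zero, mulVec_zero, dotProduct_zero]
  rw [star_trivial, dotProduct_integral_mulVec hint, integral_eq_zero_of_ae hzero] at hpos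
  exact hpos.false

end

theorem stmt11_general {W : Type*} [MeasurableSpace W] (g : Measure W) [IsProbabilityMeasure g]
    (T p : ℕ) (S : Finset ℕ)
    (N : (Fin T → ℝ) → Matrix (Fin T) (Fin T) ℝ → Measure (Fin T → ℝ))
    (hN : ∀ (μ1 μ2 : Fin T → ℝ) (Λ1 Λ2 : Matrix (Fin T) (Fin T) ℝ),
      N μ1 Λ1 = N μ2 Λ2 ↔ (μ1 = μ2 ∧ Λ1 = Λ2))
    (X : W → Matrix (Fin T) (Fin p) ℝ)
    (φ1 φ2 : ℕ → Fin p → ℝ) (Λ1 Λ2 : ℕ → Matrix (Fin T) (Fin T) ℝ)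
    (hint : ∀ s ∈ S, ∀ Λ ∈ ({Λ1 s, Λ2 s} : Set (Matrix (Fin T) (Fin T) ℝ)),
      ∀ i j, Integrable (fun w => ((X w)ᵀ * Λ⁻¹ * X w) i j) g)
    (hpd : ∀ s ∈ S, ∀ Λ ∈ ({Λ1 s, Λ2 s} : Set (Matrix (Fin T) (Fin T) ℝ)),
      (Matrix.of fun i j => ∫ w, ((X w)ᵀ * Λ⁻¹ * X w) i j ∂g).PosDef)
    (hθ : ¬ (∀ s ∈ S, φ1 s = φ2 s ∧ Λ1 s = Λ2 s)) :
    ∃ s ∈ S,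
      0 < g {w | N ((X w).mulVec (φ1 s)) (Λ1 s) ≠ N ((X w).mulVec (φ2 s)) (Λ2 s)} := by
  push Not at hθ
  obtain ⟨s, hs, hne⟩ := hθ
  refine ⟨s, hs, pos_iff_ne_zero.mpr fun h0 => ?_⟩
  have hae : ∀ᵐ w ∂g, X w *ᵥ φ1 s = X w *ᵥ φ2 s ∧ Λ1 s = Λ2 s := by
    simpa only [hN] using ae_iff.mpr h0
  have hΛ : Λ1 s = Λ2 s := hae.exists.choose_spec.2
  refine hne (sub_eq_zero.mp ?_) hΛ
  refine eq_zero_of_posDef_integral_of_ae_mulVec_eq_zero (hint s hs _ (Or.inl rfl))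
    (hpd s hs _ (Or.inl rfl)) ?_
  filter_upwards [hae] with w hw
  rw [mulVec_sub, hw.1, sub_self]

/-- Identifiability of the Gaussian model: if E[X'Λ_s⁻¹X] is positive definite for each
cohort s (for both parameter values), then distinct parameters θ₁ ≠ θ₂ yield, for some s,
conditional Gaussian distributions N(X(w)φ_s, Λ_s) that differ on a set of covariates w of
positive probability. Here `N` is the map sending a mean vector and covariance matrix to the
corresponding multivariate Gaussian distribution; two such Gaussians coincide iff their means
and covariances coincide. -/
theorem stmt11 {W : Type*} [MeasurableSpace W] (g : Measure W) [IsProbabilityMeasure g]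
    (T p : ℕ) (S : Finset ℕ)
    (N : (Fin T → ℝ) → Matrix (Fin T) (Fin T) ℝ → Measure (Fin T → ℝ))
    (hN : ∀ (μ1 μ2 : Fin T → ℝ) (Λ1 Λ2 : Matrix (Fin T) (Fin T) ℝ),
      N μ1 Λ1 = N μ2 Λ2 ↔ (μ1 = μ2 ∧ Λ1 = Λ2))
    (X : W → Matrix (Fin T) (Fin p) ℝ)
    (hXm : ∀ i j, Measurable fun w => X w i j)
    (φ1 φ2 : ℕ → Fin p → ℝ) (Λ1 Λ2 : ℕ → Matrix (Fin T) (Fin T) ℝ)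
    (hΛpd : ∀ s ∈ S, (Λ1 s).PosDef ∧ (Λ2 s).PosDef)
    (hint : ∀ s ∈ S, ∀ Λ ∈ ({Λ1 s, Λ2 s} : Set (Matrix (Fin T) (Fin T) ℝ)),
      ∀ i j, Integrable (fun w => ((X w)ᵀ * Λ⁻¹ * X w) i j) g)
    (hpd : ∀ s ∈ S, ∀ Λ ∈ ({Λ1 s, Λ2 s} : Set (Matrix (Fin T) (Fin T) ℝ)),
      (Matrix.of fun i j => ∫ w, ((X w)ᵀ * Λ⁻¹ * X w) i j ∂g).PosDef)
    (hθ : ¬ (∀ s ∈ S, φ1 s = φ2 s ∧ Λ1 s = Λ2 s)) :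
    ∃ s ∈ S,
      0 < g {w | N ((X w).mulVec (φ1 s)) (Λ1 s) ≠ N ((X w).mulVec (φ2 s)) (Λ2 s)} :=
  stmt11_general g T p S N hN X φ1 φ2 Λ1 Λ2 hint hpd hθ
end
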